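/- arXiv:2205.10727 — 4 statements merged into one kernel-verified Lean document; each statement's English description precedes it below -/
import Mathlib

section
/- If M is an n×n positive semi-definite real matrix and x, y are vectors in ℝ^n with all components strictly positive, then the 2n×2n block matrix J = [[-M, I], [Y, X]] is nonsingular, where X = diag(x) and Y = diag(y). -/
/-!
Eliminating the invertible block `X` leaves the Schur complement `-M - X⁻¹Y = -(M + diag (y / x))`.
Adding a positive diagonal to a matrix with nonnegative quadratic form makes the form positive
definite, and a matrix with positive definite quadratic form has trivial kernel.
-/

open Matrix

namespace Matrix

variable {n : Type*} [Fintype n] [DecidableEq n]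

theorem isUnit_of_dotProduct_mulVec_pos {K : Type*} [Field K] [PartialOrder K]
    {A : Matrix n n K} (hA : ∀ v ≠ 0, 0 < v ⬝ᵥ A *ᵥ v) : IsUnit A := by
  rw [isUnit_iff_isUnit_det, isUnit_iff_ne_zero]
  intro hdet
  obtain ⟨v, hv, hAv⟩ := exists_mulVec_eq_zero_iff.2 hdet
  simpa [hAv] using hA v hv

theorem dotProduct_mulVec_add_diagonal_pos {R : Type*} [CommRing R] [LinearOrder R]
    [IsStrictOrderedRing R] {A : Matrix n n R} {d : n → R}
    (hA : ∀ v, 0 ≤ v ⬝ᵥ A *ᵥ v) (hd : ∀ i, 0 < d i) {v : n → R} (hv : v ≠ 0) :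
    0 < v ⬝ᵥ (A + diagonal d) *ᵥ v := by
  obtain ⟨i, hi⟩ := Function.ne_iff.1 hv
  have hdiag : 0 < v ⬝ᵥ diagonal d *ᵥ v := by
    simp only [mulVec_diagonal, dotProduct]
    refine Finset.sum_pos' (fun j _ => ?_) ⟨i, Finset.mem_univ i, ?_⟩
    · nlinarith [hd j, mul_self_nonneg (v j)]
    · nlinarith [hd i, mul_self_pos.2 hi]
  rw [add_mulVec, dotProduct_add]
  exact add_pos_of_nonneg_of_pos (hA v) hdiag

theorem isUnit_fromBlocks_one_diagonal_iff {K : Type*} [Field K] {A : Matrix n n K}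
    {c d : n → K} (hd : ∀ i, d i ≠ 0) :
    IsUnit (fromBlocks A (1 : Matrix n n K) (diagonal c) (diagonal d)) ↔
      IsUnit (A - diagonal (c / d)) := by
  let : Invertible (diagonal d) := invertibleOfRightInverse _ (diagonal d⁻¹) <| by
    simp [diagonal_mul_diagonal, hd]
  rw [isUnit_fromBlocks_iff_of_invertible₂₂]
  change IsUnit (A - 1 * diagonal d⁻¹ * diagonal c) ↔ _
  rw [one_mul, diagonal_mul_diagonal, div_eq_inv_mul]
  rfl

end Matrix

/-- If `M` is an `n×n` positive semi-definite real matrix and `x, y` have all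
components strictly positive, then the block matrix `[[-M, I], [Y, X]]` with
`X = diag x`, `Y = diag y` is nonsingular. -/
theorem stmt_0 (n : ℕ) (M : Matrix (Fin n) (Fin n) ℝ)
    (hM : ∀ v : Fin n → ℝ, 0 ≤ ∑ i, v i * M.mulVec v i)
    (x y : Fin n → ℝ) (hx : ∀ i, 0 < x i) (hy : ∀ i, 0 < y i) :
    IsUnit (Matrix.fromBlocks (-M) (1 : Matrix (Fin n) (Fin n) ℝ)
      (Matrix.diagonal y) (Matrix.diagonal x)) := by
  rw [isUnit_fromBlocks_one_diagonal_iff fun i => (hx i).ne', ← neg_add', IsUnit.neg_iff]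
  exact isUnit_of_dotProduct_mulVec_pos fun v hv =>
    dotProduct_mulVec_add_diagonal_pos hM (fun i => div_pos (hy i) (hx i)) hv
end

section
/- Let x, y : [0, ∞) → ℝ^n be differentiable functions satisfying, for each i, d/dt (x_i(t) y_i(t)) = -(x_i(t) y_i(t) - μ(t)) where 0 ≤ μ(t) ≤ σ x_i(t) y_i(t) for a constant 0 < σ < 1 and x_i(0) y_i(0) > 0. Then for all t ≥ 0 and all i, x_i(0) y_i(0) exp(-t) ≤ x_i(t) y_i(t) ≤ x_i(0) y_i(0) exp(-(1-σ) t). -/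
open Real Set

/-!
Each product `f = xᵢ yᵢ` satisfies the differential inequalities `-f ≤ f' ≤ -(1 - σ) f`, since
`f' = -f + μ` with `0 ≤ μ ≤ σ f`. Comparison with the linear equation `g' = a g` then follows from
the fact that `f(s) e^{-a s}` is monotone whenever `a f ≤ f'`.
-/

theorem monotoneOn_mul_exp_neg_of_mul_le_deriv {f f' : ℝ → ℝ} {a : ℝ}
    (hf : ∀ s ≥ 0, HasDerivAt f (f' s) s) (hle : ∀ s ≥ 0, a * f s ≤ f' s) :
    MonotoneOn (fun s => f s * exp (-a * s)) (Ici 0) := by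
  have hderiv : ∀ s ≥ 0, HasDerivAt (fun s => f s * exp (-a * s))
      ((f' s - a * f s) * exp (-a * s)) s := by
    intro s hs
    have hexp : HasDerivAt (fun s => exp (-a * s)) (exp (-a * s) * -a) s := by
      simpa using ((hasDerivAt_id s).const_mul (-a)).exp
    exact ((hf s hs).mul hexp).congr_deriv (by ring)
  refine monotoneOn_of_hasDerivWithinAt_nonneg
    (f' := fun s => (f' s - a * f s) * exp (-a * s)) (convex_Ici 0) (fun s hs => (hderiv s hs).continuousAt.continuousWithinAt) ?_ ?_
  · intro s hs
    rw [interior_Ici] at hs ⊢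
    exact (hderiv s hs.le).hasDerivWithinAt
  · intro s hs
    rw [interior_Ici] at hs
    exact mul_nonneg (sub_nonneg.mpr (hle s hs.le)) (exp_pos _).le

theorem mul_exp_le_of_mul_le_deriv {f f' : ℝ → ℝ} {a : ℝ}
    (hf : ∀ s ≥ 0, HasDerivAt f (f' s) s) (hle : ∀ s ≥ 0, a * f s ≤ f' s)
    {t : ℝ} (ht : 0 ≤ t) : f 0 * exp (a * t) ≤ f t := by
  have hmono := monotoneOn_mul_exp_neg_of_mul_le_deriv hf hle self_mem_Ici ht ht
  simp only [mul_zero, exp_zero, mul_one] at hmono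
  calc f 0 * exp (a * t) ≤ f t * exp (-a * t) * exp (a * t) := by gcongr
    _ = f t := by rw [mul_assoc, ← exp_add]; ring_nf; rw [exp_zero, mul_one]

theorem le_mul_exp_of_deriv_le_mul {f f' : ℝ → ℝ} {a : ℝ}
    (hf : ∀ s ≥ 0, HasDerivAt f (f' s) s) (hle : ∀ s ≥ 0, f' s ≤ a * f s)
    {t : ℝ} (ht : 0 ≤ t) : f t ≤ f 0 * exp (a * t) := by
  have hneg := mul_exp_le_of_mul_le_deriv (f := -f) (f' := -f')
    (fun s hs => (hf s hs).neg) (fun s hs => by simpa using hle s hs) ht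
  simpa using hneg

theorem stmt_1_general (n : ℕ) (x y : ℝ → Fin n → ℝ) (μ : ℝ → ℝ) (σ : ℝ)
    (hderiv : ∀ i : Fin n, ∀ t ≥ (0:ℝ),
      HasDerivAt (fun s => x s i * y s i) (-(x t i * y t i - μ t)) t)
    (hμ0 : ∀ t ≥ (0:ℝ), 0 ≤ μ t)
    (hμ : ∀ i : Fin n, ∀ t ≥ (0:ℝ), μ t ≤ σ * (x t i * y t i)) :
    ∀ t ≥ (0:ℝ), ∀ i : Fin n,
      x 0 i * y 0 i * exp (-t) ≤ x t i * y t i ∧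
      x t i * y t i ≤ x 0 i * y 0 i * exp (-(1 - σ) * t) := by
  intro t ht i
  constructor
  · have hlower := mul_exp_le_of_mul_le_deriv (a := -1) (hderiv i)
      (fun s hs => by linarith [hμ0 s hs]) ht
    rwa [neg_one_mul] at hlower
  · exact le_mul_exp_of_deriv_le_mul (hderiv i) (fun s hs => by linarith [hμ i s hs]) ht

/-- If each product `xᵢ(t)yᵢ(t)` satisfies `d/dt (xᵢ yᵢ) = -(xᵢ yᵢ - μ(t))` with
`0 ≤ μ(t) ≤ σ xᵢ(t) yᵢ(t)`, `0 < σ < 1`, and `xᵢ(0)yᵢ(0) > 0`, then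
`xᵢ(0)yᵢ(0) e^{-t} ≤ xᵢ(t)yᵢ(t) ≤ xᵢ(0)yᵢ(0) e^{-(1-σ)t}` for all `t ≥ 0`. -/
theorem stmt_1 (n : ℕ) (x y : ℝ → Fin n → ℝ) (μ : ℝ → ℝ) (σ : ℝ)
    (hσ : 0 < σ) (hσ1 : σ < 1)
    (hderiv : ∀ i : Fin n, ∀ t ≥ (0:ℝ),
      HasDerivAt (fun s => x s i * y s i) (-(x t i * y t i - μ t)) t)
    (hμ0 : ∀ t ≥ (0:ℝ), 0 ≤ μ t)
    (hμ : ∀ i : Fin n, ∀ t ≥ (0:ℝ), μ t ≤ σ * (x t i * y t i))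
    (hpos : ∀ i : Fin n, 0 < x 0 i * y 0 i) :
    ∀ t ≥ (0:ℝ), ∀ i : Fin n,
      x 0 i * y 0 i * exp (-t) ≤ x t i * y t i ∧
      x t i * y t i ≤ x 0 i * y 0 i * exp (-(1 - σ) * t) :=
  stmt_1_general n x y μ σ hderiv hμ0 hμ
end

section
/- Let x, y, Δx, Δy ∈ ℝ^n satisfy componentwise x_i y_i ≥ γ μ and y_i Δx_i + x_i Δy_i = σ μ − x_i y_i, where γ ∈ (0,1), σ ∈ (0,1), μ > 0. Define for α ∈ [0,1]: x_i(α) = x_i + α Δx_i, y_i(α) = y_i + α Δy_i, μ(α) = ((x(α))^T y(α) + (1−α) ρ)/(2n) where ρ = ‖r_q‖ ≥ 0 and μ = (x^T y + ρ)/(2n). Then for each i, x_i(α) y_i(α) − γ μ(α) ≥ α ( σ μ (1 − γ/2) − α (1 + γ/2) max_j |Δx_j Δy_j| ). In particular, if 0 ≤ α ≤ min{1, ((1 − γ/2)/(1 + γ/2)) · σμ / max_j |Δx_j Δy_j|}, then x_i(α) y_i(α) ≥ γ μ(α) for all i. -/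
/-- Centrality preservation: under `xᵢyᵢ ≥ γμ` and the Newton complementarity
equation, `xᵢ(α)yᵢ(α) − γμ(α) ≥ α(σμ(1 − γ/2) − α(1 + γ/2)‖ΔXΔy‖_∞)`; in
particular the centrality condition persists for sufficiently small `α`. -/
theorem stmt_6 (n : ℕ) (hn : 0 < n) (x y Δx Δy : Fin n → ℝ)
    (γ σ μ ρ : ℝ) (hγ0 : 0 < γ) (hγ1 : γ < 1) (hσ0 : 0 < σ) (hσ1 : σ < 1)
    (hμ : 0 < μ) (hρ : 0 ≤ ρ)
    (hμdef : μ = ((∑ i, x i * y i) + ρ) / (2 * n))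
    (hcent : ∀ i, x i * y i ≥ γ * μ)
    (hstep : ∀ i, y i * Δx i + x i * Δy i = σ * μ - x i * y i) :
    ∀ α : ℝ, 0 ≤ α → α ≤ 1 →
      (∀ i, (x i + α * Δx i) * (y i + α * Δy i)
          - γ * (((∑ i, (x i + α * Δx i) * (y i + α * Δy i)) + (1 - α) * ρ) / (2 * n))
        ≥ α * (σ * μ * (1 - γ / 2)
          - α * (1 + γ / 2) *
            Finset.univ.sup' (Finset.univ_nonempty_iff.mpr ⟨⟨0, hn⟩⟩)
              (fun j => |Δx j * Δy j|))) ∧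
      (α ≤ min 1 ((1 - γ / 2) / (1 + γ / 2) * (σ * μ /
          Finset.univ.sup' (Finset.univ_nonempty_iff.mpr ⟨⟨0, hn⟩⟩)
            (fun j => |Δx j * Δy j|))) →
        ∀ i, (x i + α * Δx i) * (y i + α * Δy i) ≥
          γ * (((∑ i, (x i + α * Δx i) * (y i + α * Δy i)) + (1 - α) * ρ) / (2 * n))) := by
  intro α hα0 hα1
  set M : ℝ := Finset.univ.sup' (Finset.univ_nonempty_iff.mpr ⟨⟨0, hn⟩⟩)
      (fun j => |Δx j * Δy j|) with hMdef
  have hMi : ∀ i, |Δx i * Δy i| ≤ M := fun i =>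
    Finset.le_sup' (fun j => |Δx j * Δy j|) (Finset.mem_univ i)
  have hM0 : (0:ℝ) ≤ M := le_trans (abs_nonneg _) (hMi ⟨0, hn⟩)
  have hn' : (0:ℝ) < n := by exact_mod_cast hn
  have h2n : (0:ℝ) < 2 * n := by linarith
  have hTρ : (∑ i, x i * y i) + ρ = 2 * n * μ := by
    field_simp at hμdef; linarith
  have key : ∀ i, (x i + α * Δx i) * (y i + α * Δy i)
      = (1 - α) * (x i * y i) + α * (σ * μ) + α ^ 2 * (Δx i * Δy i) := by
    intro i; linear_combination α * hstep i
  have hsum : (∑ i, (x i + α * Δx i) * (y i + α * Δy i))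
      = (1 - α) * (∑ i, x i * y i) + n * (α * (σ * μ))
        + α ^ 2 * (∑ i, Δx i * Δy i) := by
    have h1 : α ^ 2 * (∑ i, Δx i * Δy i) = ∑ i, α ^ 2 * (Δx i * Δy i) :=
      Finset.mul_sum _ _ _
    have h2 : (1 - α) * (∑ i, x i * y i) = ∑ i, (1 - α) * (x i * y i) :=
      Finset.mul_sum _ _ _
    have h3 : (n : ℝ) * (α * (σ * μ)) = ∑ _i : Fin n, α * (σ * μ) := by
      rw [Finset.sum_const, Finset.card_univ, Fintype.card_fin, nsmul_eq_mul]
    rw [h1, h2, h3, ← Finset.sum_add_distrib, ← Finset.sum_add_distrib]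
    exact Finset.sum_congr rfl fun i _ => key i
  have hS : (∑ i, Δx i * Δy i) ≤ n * M := by
    calc (∑ i, Δx i * Δy i) ≤ ∑ _i : Fin n, M :=
          Finset.sum_le_sum (fun i _ => le_trans (le_abs_self _) (hMi i))
      _ = n * M := by
          rw [Finset.sum_const, Finset.card_univ, Fintype.card_fin, nsmul_eq_mul]
  -- the key divided quantity, bounded above
  have hdiv : γ * (((∑ i, (x i + α * Δx i) * (y i + α * Δy i)) + (1 - α) * ρ) / (2 * n))
      ≤ γ * (1 - α) * μ + γ * α * (σ * μ) / 2 + γ * α ^ 2 * M / 2 := by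
    rw [hsum, ← mul_div_assoc, div_le_iff₀ h2n]
    have hα2 : (0:ℝ) ≤ α ^ 2 := sq_nonneg α
    have h4 : γ * (1 - α) * ((∑ i, x i * y i) + ρ) = γ * (1 - α) * (2 * n * μ) := by
      rw [hTρ]
    nlinarith [h4, mul_le_mul_of_nonneg_left hS (mul_nonneg hγ0.le hα2)]
  have main : ∀ i, (x i + α * Δx i) * (y i + α * Δy i)
      - γ * (((∑ i, (x i + α * Δx i) * (y i + α * Δy i)) + (1 - α) * ρ) / (2 * n))
      ≥ α * (σ * μ * (1 - γ / 2) - α * (1 + γ / 2) * M) := by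
    intro i
    have hdi : -M ≤ Δx i * Δy i := neg_le_of_abs_le (hMi i)
    have h1 : (0:ℝ) ≤ (1 - α) * (x i * y i - γ * μ) :=
      mul_nonneg (by linarith) (by linarith [hcent i])
    have h2 : α ^ 2 * (-M) ≤ α ^ 2 * (Δx i * Δy i) :=
      mul_le_mul_of_nonneg_left hdi (sq_nonneg α)
    have := key i
    nlinarith [hdiv]
  refine ⟨main, fun hαmin i => ?_⟩
  have hrhs : 0 ≤ α * (σ * μ * (1 - γ / 2) - α * (1 + γ / 2) * M) := by
    rcases eq_or_lt_of_le hM0 with hM | hM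
    · -- M = 0 forces α = 0 via α ≤ min 1 0
      have : α ≤ 0 := by
        have := le_trans hαmin (min_le_right _ _)
        rw [← hM] at this
        simpa using this
      have hα : α = 0 := le_antisymm this hα0
      simp [hα]
    · have hαle : α ≤ (1 - γ / 2) / (1 + γ / 2) * (σ * μ / M) :=
        le_trans hαmin (min_le_right _ _)
      have h1γ : (0:ℝ) < 1 + γ / 2 := by linarith
      have heq : (1 - γ / 2) / (1 + γ / 2) * (σ * μ / M) * ((1 + γ / 2) * M)
          = σ * μ * (1 - γ / 2) := by field_simp
      have : α * ((1 + γ / 2) * M) ≤ σ * μ * (1 - γ / 2) := by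
        calc α * ((1 + γ / 2) * M)
            ≤ (1 - γ / 2) / (1 + γ / 2) * (σ * μ / M) * ((1 + γ / 2) * M) :=
              mul_le_mul_of_nonneg_right hαle (by positivity)
          _ = σ * μ * (1 - γ / 2) := heq
      nlinarith
  linarith [main i]
end

section
/- Let (u, v) satisfy v = Mu + q with M positive semi-definite, and let (x̄, ȳ) be any feasible pair (ȳ = M x̄ + q) with x̄ ≥ 0, ȳ ≥ 0. Let (x, y) ≥ 0. Then y^T(x − u) + x^T(y − v) ≤ x̄^T(y − v) + ȳ^T(x − u) + x^T y + (x − u)^T(y − v) + x̄^T ȳ. -/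
/-- Key bound used in the boundedness lemma: for a feasible pair `(u,v)`, a
nonnegative feasible pair `(x̄,ȳ)` and nonnegative `(x,y)`,
`yᵀ(x − u) + xᵀ(y − v) ≤ x̄ᵀ(y − v) + ȳᵀ(x − u) + xᵀy + (x − u)ᵀ(y − v) + x̄ᵀȳ`. -/
theorem stmt_9 (n : ℕ) (M : Matrix (Fin n) (Fin n) ℝ)
    (hM : ∀ z : Fin n → ℝ, 0 ≤ ∑ i, z i * M.mulVec z i)
    (q u v xbar ybar x y : Fin n → ℝ)
    (huv : v = M.mulVec u + q) (hbar : ybar = M.mulVec xbar + q)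
    (hxbar : ∀ i, 0 ≤ xbar i) (hybar : ∀ i, 0 ≤ ybar i)
    (hx : ∀ i, 0 ≤ x i) (hy : ∀ i, 0 ≤ y i) :
    (∑ i, y i * (x i - u i)) + (∑ i, x i * (y i - v i)) ≤
      (∑ i, xbar i * (y i - v i)) + (∑ i, ybar i * (x i - u i))
        + (∑ i, x i * y i) + (∑ i, (x i - u i) * (y i - v i))
        + (∑ i, xbar i * ybar i) := by
  have hmv : ∀ i, M.mulVec (xbar - u) i = ybar i - v i := by
    intro i
    have : M.mulVec (xbar - u) = M.mulVec xbar - M.mulVec u := Matrix.mulVec_sub M xbar u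
    rw [this, huv, hbar]
    simp [Pi.sub_apply, Pi.add_apply]
  have h0 : 0 ≤ ∑ i, (xbar i - u i) * (ybar i - v i) := by
    have := hM (xbar - u)
    simpa [hmv, Pi.sub_apply] using this
  have hkey : ∑ i, (xbar i - u i) * (ybar i - v i) =
      (∑ i, xbar i * ybar i) - (∑ i, xbar i * y i) + (∑ i, xbar i * (y i - v i))
      - (∑ i, x i * ybar i) + (∑ i, x i * y i) - (∑ i, x i * (y i - v i))
      + (∑ i, ybar i * (x i - u i)) - (∑ i, y i * (x i - u i))
      + (∑ i, (x i - u i) * (y i - v i)) := by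
    simp only [← Finset.sum_sub_distrib, ← Finset.sum_add_distrib]
    exact Finset.sum_congr rfl fun i _ => by ring
  have h1 : 0 ≤ ∑ i, xbar i * y i :=
    Finset.sum_nonneg fun i _ => mul_nonneg (hxbar i) (hy i)
  have h2 : 0 ≤ ∑ i, x i * ybar i :=
    Finset.sum_nonneg fun i _ => mul_nonneg (hx i) (hybar i)
  linarith [hkey ▸ h0]
end
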